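/- If v^n satisfies D^α_τ v^n + λ v^n = 0 for all n ≥ 1 with λ ≥ 0 and v^0 ≥ 0, then 0 ≤ v^n ≤ v^0 for all n (discrete maximum principle for the L1 scheme). -/

import Mathlib

/-- Coefficient `ζ^{(α)}_k = (k+1)^{1-α} - k^{1-α}` of the L1 scheme. -/
noncomputable def zetaW (α : ℝ) (k : ℕ) : ℝ :=
  ((k : ℝ) + 1) ^ (1 - α) - (k : ℝ) ^ (1 - α)

/-- L1 discrete Caputo derivative at step `n ≥ 1` with time step `τ`. -/
noncomputable def l1Caputo (α τ : ℝ) (v : ℕ → ℝ) (n : ℕ) : ℝ :=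
  (1 / (τ ^ α * Real.Gamma (2 - α))) *
    (v n - v (n - 1) + ∑ j ∈ Finset.Icc 2 n, zetaW α (j - 1) * (v (n - j + 1) - v (n - j)))

/-!
Summation by parts turns the L1 scheme at step `n + 1` into
`(c + λ) v^{n+1} = c (∑_{k<n} (ζ_k - ζ_{k+1}) v^{n-k} + ζ_n v^0)` with `c > 0`.
Since `ζ_0 = 1` and the weights `ζ_k` are nonnegative and decreasing, the right-hand side is
`c` times a convex combination of `v^0, …, v^n`, so by strong induction it lies in `[0, c v^0]`,
and dividing by `c + λ ≥ c` keeps `v^{n+1}` in `[0, v^0]`.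
-/

open Finset

lemma sum_range_mul_sub_eq (a u : ℕ → ℝ) (n : ℕ) :
    ∑ k ∈ range (n + 1), a k * (u k - u (k + 1)) =
      a 0 * u 0 - ∑ k ∈ range n, (a k - a (k + 1)) * u (k + 1) - a n * u (n + 1) := by
  induction n with
  | zero => simp; ring
  | succ n ih => rw [sum_range_succ, ih, sum_range_succ]; ring

lemma sum_range_sub_mul_mem_Icc {a x : ℕ → ℝ} (ha : Antitone a) {m : ℕ} {M : ℝ}
    (hx : ∀ k < m, x k ∈ Set.Icc 0 M) :
    ∑ k ∈ range m, (a k - a (k + 1)) * x k ∈ Set.Icc 0 ((a 0 - a m) * M) := by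
  have hw : ∀ k, 0 ≤ a k - a (k + 1) := fun k => sub_nonneg.2 (ha k.le_succ)
  constructor
  · exact sum_nonneg fun k hk => mul_nonneg (hw k) (hx k (mem_range.1 hk)).1
  · rw [← sum_range_sub' a m, sum_mul]
    exact sum_le_sum fun k hk => mul_le_mul_of_nonneg_left (hx k (mem_range.1 hk)).2 (hw k)

lemma zetaW_zero {α : ℝ} (hα : α ≠ 1) : zetaW α 0 = 1 := by
  simp [zetaW, Real.zero_rpow (sub_ne_zero.2 hα.symm)]

lemma zetaW_nonneg {α : ℝ} (hα : α ≤ 1) (k : ℕ) : 0 ≤ zetaW α k :=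
  sub_nonneg.2 <| Real.rpow_le_rpow k.cast_nonneg (by linarith) (by linarith)

/-- Concavity of `x ↦ x^{1-α}` at the midpoint `k + 1` of `k` and `k + 2`. -/
lemma zetaW_antitone {α : ℝ} (hα0 : 0 ≤ α) (hα1 : α ≤ 1) : Antitone (zetaW α) := by
  refine antitone_nat_of_succ_le fun k => ?_
  have hmid := (Real.concaveOn_rpow (p := 1 - α) (by linarith) (by linarith)).2
    (Set.mem_Ici.2 k.cast_nonneg) (Set.mem_Ici.2 (by positivity : (0 : ℝ) ≤ k + 2))
    (by norm_num : (0 : ℝ) ≤ 1 / 2) (by norm_num : (0 : ℝ) ≤ 1 / 2) (by norm_num)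
  have hk : (1 / 2 : ℝ) • (k : ℝ) + (1 / 2 : ℝ) • ((k : ℝ) + 2) = k + 1 := by
    simp only [smul_eq_mul]; ring
  rw [hk, smul_eq_mul, smul_eq_mul] at hmid
  simp only [zetaW, Nat.cast_succ, add_assoc, one_add_one_eq_two]
  linarith

lemma l1Caputo_succ_eq {α : ℝ} (hα : α ≠ 1) (τ : ℝ) (v : ℕ → ℝ) (n : ℕ) :
    l1Caputo α τ v (n + 1) = 1 / (τ ^ α * Real.Gamma (2 - α)) *
      (v (n + 1) - (∑ k ∈ range n, (zetaW α k - zetaW α (k + 1)) * v (n - k) +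
        zetaW α n * v 0)) := by
  have hIcc : ∑ j ∈ Icc 2 (n + 1), zetaW α (j - 1) * (v (n + 1 - j + 1) - v (n + 1 - j)) =
      ∑ k ∈ range n, zetaW α (k + 1) * (v (n - k) - v (n - (k + 1))) := by
    refine sum_nbij' (fun j => j - 2) (fun k => k + 2) ?_ ?_ ?_ ?_ ?_ <;>
      intro j hj <;> simp only [mem_Icc, mem_range] at hj ⊢
    · omega
    · omega
    · omega
    · omega
    · rw [show j - 1 = j - 2 + 1 by omega, show n + 1 - j + 1 = n - (j - 2) by omega,
        show n + 1 - j = n - (j - 2 + 1) by omega]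
  have hsum := sum_range_mul_sub_eq (zetaW α) (fun k => v (n + 1 - k)) n
  simp only [sum_range_succ', Nat.add_sub_add_right, Nat.sub_zero, Nat.sub_self,
    zetaW_zero hα, one_mul] at hsum
  rw [l1Caputo, Nat.add_sub_cancel, hIcc]
  congr 1
  linarith

lemma mem_Icc_of_backward_euler_step {c lam x y M : ℝ} (hc : 0 < c) (hlam : 0 ≤ lam)
    (hy : y ∈ Set.Icc 0 M) (hstep : c * (x - y) + lam * x = 0) : x ∈ Set.Icc 0 M := by
  have hx : (c + lam) * x = c * y := by linarith
  constructor <;> nlinarith [hy.1, hy.2]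

theorem l1_discrete_maximum_principle (α τ lam : ℝ) (hα0 : 0 < α) (hα1 : α < 1)
    (hτ : 0 < τ) (hlam : 0 ≤ lam) (v : ℕ → ℝ)
    (hscheme : ∀ n : ℕ, 1 ≤ n → l1Caputo α τ v n + lam * v n = 0)
    (hv0 : 0 ≤ v 0) :
    ∀ n : ℕ, 0 ≤ v n ∧ v n ≤ v 0 := by
  set c := 1 / (τ ^ α * Real.Gamma (2 - α)) with hc_def
  have hc : 0 < c := by
    have hΓ := Real.Gamma_pos_of_pos (by linarith : 0 < 2 - α)
    have hτα := Real.rpow_pos_of_pos hτ α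
    positivity
  intro n
  induction n using Nat.strong_induction_on with
  | _ n ih =>
  rcases n with _ | n
  · exact ⟨hv0, le_rfl⟩
  obtain ⟨hS0, hS1⟩ := sum_range_sub_mul_mem_Icc (zetaW_antitone hα0.le hα1.le)
    (m := n) (x := fun k => v (n - k)) fun k _ => ih (n - k) (by omega)
  have hζ := zetaW_nonneg hα1.le n
  have hstep := hscheme (n + 1) n.succ_pos
  rw [l1Caputo_succ_eq hα1.ne, ← hc_def] at hstep
  rw [zetaW_zero hα1.ne] at hS1
  exact mem_Icc_of_backward_euler_step hc hlam
    ⟨add_nonneg hS0 (mul_nonneg hζ hv0), by linarith⟩ hstep
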